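/- arXiv:1802.03302 — 2 statements merged into one kernel-verified Lean document; each statement's English description precedes it below -/
import Mathlib

section
/- Let U ⊆ ℝⁿ be open and v : U → ℝᵐ be Lebesgue measurable. Then the approximate jump set J_v of v is Lebesgue negligible: Lⁿ(J_v) = 0. -/
open MeasureTheory Metric Filter
open scoped Topology RealInnerProductSpace

/-- Approximate limit of `v` at `x` along the set `E` (vanishing density of superlevel
sets of `‖v - a‖`). -/
def ApproxLimitOn {n m : ℕ} (E : Set (EuclideanSpace ℝ (Fin n)))
    (v : EuclideanSpace ℝ (Fin n) → EuclideanSpace ℝ (Fin m))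
    (x : EuclideanSpace ℝ (Fin n)) (a : EuclideanSpace ℝ (Fin m)) : Prop :=
  ∀ ε > (0:ℝ), Tendsto
    (fun ρ : ℝ => (volume (E ∩ ball x ρ ∩ {y | ε < ‖v y - a‖})).toReal / ρ ^ n)
    (𝓝[>] (0:ℝ)) (𝓝 0)

/-- The approximate jump set of a measurable function `v : U → ℝᵐ`. -/
def ApproxJumpSet {n m : ℕ} (U : Set (EuclideanSpace ℝ (Fin n)))
    (v : EuclideanSpace ℝ (Fin n) → EuclideanSpace ℝ (Fin m)) :
    Set (EuclideanSpace ℝ (Fin n)) :=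
  {x ∈ U | ∃ (a b : EuclideanSpace ℝ (Fin m)) (ν : EuclideanSpace ℝ (Fin n)),
    a ≠ b ∧ ‖ν‖ = 1 ∧
    ApproxLimitOn {y | 0 < ⟪y - x, ν⟫} v x a ∧
    ApproxLimitOn {y | ⟪y - x, ν⟫ < 0} v x b}

/-!
By the Lebesgue density theorem, applied to the preimages of the sets of a countable basis of
`ℝᵐ`, almost every `x` is a point of approximate continuity of `v`: `v` has approximate limit
`v x` at `x` along the whole space. Approximate limits along a set whose density at `x` does not
vanish are unique, and a half-space through `x` does not have vanishing density at `x`, since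
inside `ball x ρ` it contains a closed ball of radius `ρ / 4`. So at a point of approximate
continuity both one-sided limits equal `v x`, and `x` is not a jump point.
-/
section ApproxJump

variable {n m : ℕ}

def VanishingDensityAt (A : Set (EuclideanSpace ℝ (Fin n))) (x : EuclideanSpace ℝ (Fin n)) :
    Prop :=
  Tendsto (fun ρ : ℝ => volume.real (A ∩ ball x ρ) / ρ ^ n) (𝓝[>] 0) (𝓝 0)

theorem approxLimitOn_iff {E : Set (EuclideanSpace ℝ (Fin n))}
    {v : EuclideanSpace ℝ (Fin n) → EuclideanSpace ℝ (Fin m)} {x : EuclideanSpace ℝ (Fin n)}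
    {a : EuclideanSpace ℝ (Fin m)} :
    ApproxLimitOn E v x a ↔ ∀ ε > (0:ℝ), VanishingDensityAt (E ∩ {y | ε < ‖v y - a‖}) x := by
  simp only [ApproxLimitOn, VanishingDensityAt, measureReal_def, Set.inter_right_comm]

namespace VanishingDensityAt

variable {A B : Set (EuclideanSpace ℝ (Fin n))} {x : EuclideanSpace ℝ (Fin n)}

theorem mono (hB : VanishingDensityAt B x) (hAB : A ⊆ B) : VanishingDensityAt A x := by
  refine squeeze_zero' ?_ ?_ hB
  · filter_upwards [self_mem_nhdsWithin] with ρ (hρ : 0 < ρ)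
    positivity
  · filter_upwards [self_mem_nhdsWithin] with ρ (hρ : 0 < ρ)
    gcongr
    exact (measure_inter_lt_top_of_right_ne_top measure_ball_lt_top.ne).ne

theorem union (hA : VanishingDensityAt A x) (hB : VanishingDensityAt B x) :
    VanishingDensityAt (A ∪ B) x := by
  refine squeeze_zero' ?_ ?_ (by simpa using hA.add hB)
  · filter_upwards [self_mem_nhdsWithin] with ρ (hρ : 0 < ρ)
    positivity
  · filter_upwards [self_mem_nhdsWithin] with ρ (hρ : 0 < ρ)
    rw [← add_div, Set.union_inter_distrib_right]
    gcongr
    exact measureReal_union_le _ _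

end VanishingDensityAt

theorem ApproxLimitOn.mono {E F : Set (EuclideanSpace ℝ (Fin n))}
    {v : EuclideanSpace ℝ (Fin n) → EuclideanSpace ℝ (Fin m)} {x : EuclideanSpace ℝ (Fin n)}
    {a : EuclideanSpace ℝ (Fin m)} (h : ApproxLimitOn F v x a) (hEF : E ⊆ F) :
    ApproxLimitOn E v x a := by
  rw [approxLimitOn_iff] at h ⊢
  exact fun ε hε => (h ε hε).mono (Set.inter_subset_inter_left _ hEF)

theorem ae_vanishingDensityAt {A : Set (EuclideanSpace ℝ (Fin n))} (hA : MeasurableSet A) :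
    ∀ᵐ x, x ∉ A → VanishingDensityAt A x := by
  filter_upwards [Besicovitch.ae_tendsto_measure_inter_div_of_measurableSet volume hA]
    with x hx hxA
  rw [Set.indicator_of_notMem hxA] at hx
  set κ := volume.real (ball (0 : EuclideanSpace ℝ (Fin n)) 1) with hκ_def
  have hκ : 0 < κ := ENNReal.toReal_pos (measure_ball_pos _ _ one_pos).ne' measure_ball_lt_top.ne
  have hratio := ((ENNReal.tendsto_toReal ENNReal.zero_ne_top).comp hx).const_mul κ
  refine squeeze_zero' ?_ ?_ (by rwa [ENNReal.toReal_zero, mul_zero] at hratio)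
  · filter_upwards [self_mem_nhdsWithin] with ρ (hρ : 0 < ρ)
    positivity
  · filter_upwards [self_mem_nhdsWithin] with ρ (hρ : 0 < ρ)
    have hfin : volume (A ∩ closedBall x ρ) ≠ ⊤ :=
      (measure_inter_lt_top_of_right_ne_top measure_closedBall_lt_top.ne).ne
    calc volume.real (A ∩ ball x ρ) / ρ ^ n
        ≤ volume.real (A ∩ closedBall x ρ) / ρ ^ n := by
          gcongr ?_ / _
          exact measureReal_mono (Set.inter_subset_inter_right _ ball_subset_closedBall) hfin
      _ = κ * (volume (A ∩ closedBall x ρ) / volume (closedBall x ρ)).toReal := by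
          rw [ENNReal.toReal_div, ← measureReal_def, ← measureReal_def,
            Measure.addHaar_real_closedBall _ _ hρ.le, finrank_euclideanSpace_fin, ← hκ_def]
          field_simp

open TopologicalSpace in
theorem ae_approxLimitOn_univ {v : EuclideanSpace ℝ (Fin n) → EuclideanSpace ℝ (Fin m)}
    (hv : Measurable v) : ∀ᵐ x, ApproxLimitOn Set.univ v x (v x) := by
  have hbasis : ∀ᵐ x, ∀ b ∈ countableBasis (EuclideanSpace ℝ (Fin m)), v x ∈ b →
      VanishingDensityAt (v ⁻¹' b)ᶜ x := by
    rw [ae_ball_iff (countable_countableBasis _)]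
    intro b hb
    filter_upwards [ae_vanishingDensityAt
      (hv (isOpen_of_mem_countableBasis hb).measurableSet).compl] with x hx hxb
    exact hx (not_not.2 hxb)
  filter_upwards [hbasis] with x hx
  rw [approxLimitOn_iff]
  intro ε hε
  obtain ⟨b, hb, hxb, hbε⟩ :=
    (isBasis_countableBasis _).mem_nhds_iff.1 (ball_mem_nhds (v x) hε)
  refine (hx b hb hxb).mono fun y hy hyb => ?_
  have hvy : dist (v y) (v x) < ε := hbε hyb
  rw [dist_eq_norm] at hvy
  exact hvy.not_gt hy.2

theorem ApproxLimitOn.eq_of_not_vanishingDensityAt {E : Set (EuclideanSpace ℝ (Fin n))}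
    {v : EuclideanSpace ℝ (Fin n) → EuclideanSpace ℝ (Fin m)} {x : EuclideanSpace ℝ (Fin n)}
    {a b : EuclideanSpace ℝ (Fin m)} (hE : ¬ VanishingDensityAt E x)
    (ha : ApproxLimitOn E v x a) (hb : ApproxLimitOn E v x b) : a = b := by
  by_contra hab
  set ε := ‖a - b‖ / 3 with hε_def
  have hε : 0 < ε := by have := norm_pos_iff.2 (sub_ne_zero.2 hab); positivity
  rw [approxLimitOn_iff] at ha hb
  refine hE (((ha ε hε).union (hb ε hε)).mono fun y hy => ?_)
  by_cases hya : ε < ‖v y - a‖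
  · exact Or.inl ⟨hy, hya⟩
  · have := norm_sub_le_norm_sub_add_norm_sub a (v y) b
    rw [norm_sub_rev a (v y)] at this
    exact Or.inr ⟨hy, show ε < ‖v y - b‖ by linarith⟩

theorem closedBall_subset_halfSpace_inter_ball {x ν : EuclideanSpace ℝ (Fin n)} (hν : ‖ν‖ = 1)
    {ρ : ℝ} (hρ : 0 < ρ) :
    closedBall (x + (ρ / 2) • ν) (ρ / 4) ⊆ {y | 0 < ⟪y - x, ν⟫} ∩ ball x ρ := by
  have hdist : dist (x + (ρ / 2) • ν) x = ρ / 2 := by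
    rw [dist_eq_norm, add_sub_cancel_left, norm_smul, hν, Real.norm_of_nonneg (by positivity),
      mul_one]
  refine fun y hy => ⟨?_, closedBall_subset_ball' (by linarith) hy⟩
  have hinner : ⟪y - x, ν⟫ = ρ / 2 - ⟪x + (ρ / 2) • ν - y, ν⟫ := by
    simp only [inner_sub_left, inner_add_left, real_inner_smul_left, real_inner_self_eq_norm_sq,
      hν]
    ring
  have hle : ⟪x + (ρ / 2) • ν - y, ν⟫ ≤ ρ / 4 := by
    calc ⟪x + (ρ / 2) • ν - y, ν⟫ ≤ ‖x + (ρ / 2) • ν - y‖ * ‖ν‖ := real_inner_le_norm _ _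
      _ ≤ ρ / 4 := by rw [hν, mul_one, ← dist_eq_norm, dist_comm]; exact hy
  show 0 < ⟪y - x, ν⟫
  linarith

theorem not_vanishingDensityAt_halfSpace {x ν : EuclideanSpace ℝ (Fin n)} (hν : ‖ν‖ = 1) :
    ¬ VanishingDensityAt {y | 0 < ⟪y - x, ν⟫} x := by
  intro h
  set κ := volume.real (ball (0 : EuclideanSpace ℝ (Fin n)) 1) with hκ_def
  have hκ : 0 < κ := ENNReal.toReal_pos (measure_ball_pos _ _ one_pos).ne' measure_ball_lt_top.ne
  have hlower : ∀ ρ ∈ Set.Ioi (0:ℝ),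
      κ / 4 ^ n ≤ volume.real ({y | 0 < ⟪y - x, ν⟫} ∩ ball x ρ) / ρ ^ n := by
    intro ρ (hρ : 0 < ρ)
    calc κ / 4 ^ n = volume.real (closedBall (x + (ρ / 2) • ν) (ρ / 4)) / ρ ^ n := by
          rw [Measure.addHaar_real_closedBall _ _ (by positivity), finrank_euclideanSpace_fin,
            ← hκ_def, div_pow]
          field_simp
      _ ≤ _ := by
          gcongr ?_ / _
          exact measureReal_mono (closedBall_subset_halfSpace_inter_ball hν hρ)
            (measure_inter_lt_top_of_right_ne_top measure_ball_lt_top.ne).ne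
  have := ge_of_tendsto h (eventually_nhdsWithin_of_forall hlower)
  have : 0 < κ / 4 ^ n := by positivity
  linarith

end ApproxJump

theorem stmt1_general {n m : ℕ} (U : Set (EuclideanSpace ℝ (Fin n)))
    (v : EuclideanSpace ℝ (Fin n) → EuclideanSpace ℝ (Fin m)) (hv : Measurable v) :
    volume (ApproxJumpSet U v) = 0 := by
  refine measure_mono_null (fun x hx => ?_) (ae_iff.mp (ae_approxLimitOn_univ hv))
  intro hcont
  obtain ⟨-, a, b, ν, hab, hν, ha, hb⟩ := hx
  have hneg : {y | ⟪y - x, ν⟫ < 0} = {y | 0 < ⟪y - x, -ν⟫} := by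
    simp only [inner_neg_right, neg_pos]
  have ha' : a = v x := ha.eq_of_not_vanishingDensityAt (not_vanishingDensityAt_halfSpace hν)
    (hcont.mono (Set.subset_univ _))
  have hb' : b = v x := by
    rw [hneg] at hb
    exact hb.eq_of_not_vanishingDensityAt
      (not_vanishingDensityAt_halfSpace ((norm_neg ν).trans hν))
      (hcont.mono (Set.subset_univ _))
  exact hab (ha'.trans hb'.symm)

/-- **The approximate jump set of a measurable function is Lebesgue negligible.** -/
theorem stmt1 {n m : ℕ} (U : Set (EuclideanSpace ℝ (Fin n))) (hU : IsOpen U)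
    (v : EuclideanSpace ℝ (Fin n) → EuclideanSpace ℝ (Fin m)) (hv : Measurable v) :
    volume (ApproxJumpSet U v) = 0 :=
  stmt1_general U v hv
end

section
/- Let (a_h)_h be a sequence of affine functions a_h : ℝⁿ → ℝ such that (a_h)_h is unbounded (in any norm on the finite-dimensional space of affine functions). Then there exists a subsequence (a_{h_k})_k satisfying one of the following: either a_{h_k}(x) → +∞ for every x ∈ ℝⁿ, or a_{h_k}(x) → −∞ for every x ∈ ℝⁿ, or there exist ν ∈ ℝⁿ \ {0} and t ∈ ℝ such that a_{h_k}(x) → +∞ for every x with x·ν > t and a_{h_k}(x) → −∞ for every x with x·ν < t. -/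
open Filter Metric Set
open scoped Topology RealInnerProductSpace

/-!
Normalise `(c h, d h)` by its norm. By compactness of the unit sphere of `ℝⁿ × ℝ`, along a
subsequence the norms tend to `∞` and the normalised pairs converge to some unit vector `(ν, δ)`.
Writing `⟪c h, x⟫ + d h = ‖(c h, d h)‖ * (normalised value at x)`, the subsequence diverges to
`±∞` wherever the limit affine function `x ↦ ⟪ν, x⟫ + δ` is positive, resp. negative. This limit
is a nonzero constant when `ν = 0`, and changes sign across the hyperplane `⟪x, ν⟫ = -δ` otherwise.
-/

theorem frequently_lt_of_not_bddAbove_range {β : Type*} [LinearOrder β] {f : ℕ → β}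
    (hf : ¬BddAbove (range f)) (b : β) : ∃ᶠ k in atTop, b < f k := by
  contrapose! hf
  exact (isBoundedUnder_of_eventually_le hf).bddAbove_range

theorem not_bddAbove_range_norm_prod_mk {ι E F : Type*} [SeminormedAddCommGroup E]
    [SeminormedAddCommGroup F] {f : ι → E} {g : ι → F}
    (h : ¬∃ R : ℝ, ∀ i, ‖f i‖ + ‖g i‖ ≤ R) : ¬BddAbove (range fun i => ‖(f i, g i)‖) := by
  rintro ⟨R, hR⟩
  refine h ⟨2 * R, fun i => ?_⟩
  have := hR ⟨i, rfl⟩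
  have := norm_fst_le (f i, g i)
  have := norm_snd_le (f i, g i)
  linarith

section Normalization

variable {V : Type*} [NormedAddCommGroup V] [NormedSpace ℝ V]

theorem exists_strictMono_tendsto_norm_atTop_and_normalized_tendsto [ProperSpace V]
    {v : ℕ → V} (hv : ¬BddAbove (range fun k => ‖v k‖)) :
    ∃ φ : ℕ → ℕ, StrictMono φ ∧ Tendsto (fun k => ‖v (φ k)‖) atTop atTop ∧
      ∃ a ∈ sphere (0 : V) 1, Tendsto (fun k => ‖v (φ k)‖⁻¹ • v (φ k)) atTop (𝓝 a) := by
  obtain ⟨ψ, hψ, hψ_large⟩ := extraction_forall_of_frequently fun k : ℕ =>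
    frequently_lt_of_not_bddAbove_range hv (k : ℝ)
  have h_sphere : ∀ k, ‖v (ψ k)‖⁻¹ • v (ψ k) ∈ sphere (0 : V) 1 := fun k => by
    have h_pos : 0 < ‖v (ψ k)‖ := k.cast_nonneg.trans_lt (hψ_large k)
    rw [mem_sphere_zero_iff_norm, norm_smul, norm_inv, norm_norm, inv_mul_cancel₀ h_pos.ne']
  obtain ⟨a, ha, φ, hφ, h_lim⟩ := (isCompact_sphere (0 : V) 1).tendsto_subseq h_sphere
  refine ⟨ψ ∘ φ, hψ.comp hφ, ?_, a, ha, h_lim⟩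
  exact tendsto_atTop_mono (fun k => (hψ_large (φ k)).le)
    (tendsto_natCast_atTop_atTop.comp hφ.tendsto_atTop)

variable {ι : Type*} {l : Filter ι} {r : ι → ℝ} {v : ι → V} {a : V}

theorem ContinuousLinearMap.tendsto_atTop_of_inv_smul_tendsto (L : V →L[ℝ] ℝ)
    (hr : Tendsto r l atTop) (hv : Tendsto (fun i => (r i)⁻¹ • v i) l (𝓝 a)) (ha : 0 < L a) :
    Tendsto (fun i => L (v i)) l atTop := by
  have h_scaled : Tendsto (fun i => r i * L ((r i)⁻¹ • v i)) l atTop :=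
    hr.atTop_mul_pos ha ((L.continuous.tendsto a).comp hv)
  refine h_scaled.congr' ?_
  filter_upwards [hr.eventually_gt_atTop 0] with i hi
  rw [map_smul, smul_eq_mul, mul_inv_cancel_left₀ hi.ne']

theorem ContinuousLinearMap.tendsto_atBot_of_inv_smul_tendsto (L : V →L[ℝ] ℝ)
    (hr : Tendsto r l atTop) (hv : Tendsto (fun i => (r i)⁻¹ • v i) l (𝓝 a)) (ha : L a < 0) :
    Tendsto (fun i => L (v i)) l atBot := by
  rw [← tendsto_neg_atTop_iff]
  exact (-L).tendsto_atTop_of_inv_smul_tendsto hr hv (by simpa using ha)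

end Normalization

/-- **Trichotomy for unbounded sequences of affine functions.** If a sequence of affine
functions `x ↦ ⟪c h, x⟫ + d h` on `ℝⁿ` is unbounded (in the finite-dimensional space of
affine functions), then some subsequence diverges to `+∞` everywhere, or to `-∞`
everywhere, or to `+∞` on one side of a hyperplane `{x ⬝ ν = t}` and to `-∞` on the
other side. -/
theorem stmt2 {n : ℕ}
    (c : ℕ → EuclideanSpace ℝ (Fin n)) (d : ℕ → ℝ)
    (hunb : ¬ ∃ R : ℝ, ∀ h : ℕ, ‖c h‖ + |d h| ≤ R) :
    ∃ φ : ℕ → ℕ, StrictMono φ ∧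
      ((∀ x : EuclideanSpace ℝ (Fin n),
          Tendsto (fun k => ⟪c (φ k), x⟫ + d (φ k)) atTop atTop) ∨
       (∀ x : EuclideanSpace ℝ (Fin n),
          Tendsto (fun k => ⟪c (φ k), x⟫ + d (φ k)) atTop atBot) ∨
       (∃ (ν : EuclideanSpace ℝ (Fin n)) (t : ℝ), ν ≠ 0 ∧
          (∀ x : EuclideanSpace ℝ (Fin n), t < ⟪x, ν⟫ →
            Tendsto (fun k => ⟪c (φ k), x⟫ + d (φ k)) atTop atTop) ∧
          (∀ x : EuclideanSpace ℝ (Fin n), ⟪x, ν⟫ < t →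
            Tendsto (fun k => ⟪c (φ k), x⟫ + d (φ k)) atTop atBot))) := by
  obtain ⟨φ, hφ, h_norm, ⟨ν, δ⟩, h_unit, h_lim⟩ :=
    exists_strictMono_tendsto_norm_atTop_and_normalized_tendsto
      (not_bddAbove_range_norm_prod_mk (f := c) (g := d)
        (by simpa only [Real.norm_eq_abs] using hunb))
  let eval x : (EuclideanSpace ℝ (Fin n) × ℝ) →L[ℝ] ℝ :=
    (innerSL ℝ x).coprod (ContinuousLinearMap.id ℝ ℝ)
  have h_eval : ∀ x (p : EuclideanSpace ℝ (Fin n) × ℝ), eval x p = ⟪p.1, x⟫ + p.2 :=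
    fun x p => by simp [eval, real_inner_comm]
  have h_top x (hx : 0 < ⟪ν, x⟫ + δ) : Tendsto (fun k => ⟪c (φ k), x⟫ + d (φ k)) atTop atTop := by
    simpa only [h_eval] using (eval x).tendsto_atTop_of_inv_smul_tendsto h_norm h_lim
      (by rwa [h_eval])
  have h_bot x (hx : ⟪ν, x⟫ + δ < 0) : Tendsto (fun k => ⟪c (φ k), x⟫ + d (φ k)) atTop atBot := by
    simpa only [h_eval] using (eval x).tendsto_atBot_of_inv_smul_tendsto h_norm h_lim
      (by rwa [h_eval])
  refine ⟨φ, hφ, ?_⟩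
  by_cases hν : ν = 0
  · have hδ : δ ≠ 0 := fun hδ => ne_of_mem_sphere h_unit one_ne_zero (by simp [hν, hδ])
    subst hν
    rcases hδ.lt_or_gt with hδ | hδ
    · exact Or.inr (Or.inl fun x => h_bot x (by simpa using hδ))
    · exact Or.inl fun x => h_top x (by simpa using hδ)
  · refine Or.inr (Or.inr ⟨ν, -δ, hν, fun x hx => h_top x ?_, fun x hx => h_bot x ?_⟩) <;>
      rw [real_inner_comm] <;> linarith
end
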